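/- For the 2-fold anisotropy γ̂(θ) = 1 + β cos 2θ (with |β| < 1, so γ̂ > 0), the function F̃^θ(θ̂) = [γ̂(θ̂)² - γ̂(θ)² - 2γ̂(θ)γ̂'(θ)cos(θ̂-θ)sin(θ̂-θ)]/[γ̂(θ)sin²(θ̂-θ)] + 2γ̂(θ) simplifies to F̃^θ(θ̂) = 4 - 2(1+β cos 2θ) + 2β²(1 - cos 2(θ̂+θ))/(1+β cos 2θ) for θ̂ - θ not a multiple of π. Consequently the maximum of F̃^θ over θ̂ ∈ [θ-π/2, θ+π/2] equals 4 - 2γ̂(θ) + 4β²/γ̂(θ), attained at θ̂ = π/2 - θ (mod π). -/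

import Mathlib

/-- The 2-fold anisotropy in angle form: γ̂(θ) = 1 + β cos 2θ. -/
noncomputable def gam2 (β θ : ℝ) : ℝ := 1 + β * Real.cos (2 * θ)

/-- The angle form F̃^θ(θ̂) of the function F, with γ̂'(θ) = -2β sin 2θ. -/
noncomputable def Ftil (β θ θh : ℝ) : ℝ :=
  (gam2 β θh ^ 2 - gam2 β θ ^ 2 -
      2 * gam2 β θ * (-(2 * β * Real.sin (2 * θ))) * Real.cos (θh - θ) * Real.sin (θh - θ)) /
    (gam2 β θ * Real.sin (θh - θ) ^ 2) + 2 * gam2 β θ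

lemma gam2_pos (β θ : ℝ) (hβ : |β| < 1) : 0 < gam2 β θ := by
  have h1 : |β * Real.cos (2*θ)| < 1 := by
    calc |β * Real.cos (2*θ)| = |β| * |Real.cos (2*θ)| := abs_mul _ _
    _ ≤ |β| * 1 := by gcongr; exact Real.abs_cos_le_one _
    _ < 1 := by simpa using hβ
  have := abs_lt.1 h1
  unfold gam2; linarith [this.1]

lemma Ftil_eq (β θ θh : ℝ) (hβ : |β| < 1) (hs : Real.sin (θh - θ) ≠ 0) :
    Ftil β θ θh = 4 - 2 * (1 + β * Real.cos (2 * θ)) +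
      2 * β ^ 2 * (1 - Real.cos (2 * (θh + θ))) / (1 + β * Real.cos (2 * θ)) := by
  have hg : gam2 β θ ≠ 0 := ne_of_gt (gam2_pos β θ hβ)
  unfold Ftil gam2 at *
  rw [show (2:ℝ) * (θh + θ) = (θh + θ) + (θh + θ) by ring, Real.cos_add (θh+θ),
      show (2:ℝ) * θh = θh + θh by ring, show (2:ℝ) * θ = θ + θ by ring,
      Real.cos_add θh, Real.cos_add θ, Real.sin_add θ] at *
  rw [Real.cos_sub, Real.sin_sub] at *
  rw [Real.cos_add, Real.sin_add] at *
  set a := Real.sin θ; set b := Real.cos θ; set c := Real.sin θh; set d := Real.cos θh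
  have h1 : a^2 + b^2 = 1 := Real.sin_sq_add_cos_sq θ
  have h2 : c^2 + d^2 = 1 := Real.sin_sq_add_cos_sq θh
  have hg' : 1 + β * (b ^ 2 - a ^ 2) ≠ 0 := by simpa [sq] using hg
  field_simp
  linear_combination ((-1*β^2*b^2) + (3*β^2*a^2) + (-2*β) + (-4*β^2*a^2*b^2*d^2) + (-4*β*a^2*d^2) + (4*β^2*b^4*c^2) + (4*β*b^2*c^2) + (2*β^2*b^2*c^2*d^2) + (-4*β^2*a*b*c^3*d) + (4*β^2*a^2*c^4) + (-2*β^2*b^2*c^4) + (10*β^2*a^2*c^2*d^2) + (2*β^2*c^2) + (-4*β^2*a*b*c*d^3) + (2*β^2*a^2*d^4) + (-1*β^2) + (4*β^2*a^4*d^2) + (-4*β^2*a^2*d^2) + (-4*β^2*a^2*b^2*c^2) + (4*β^2*b^2*c^2) + (4*β*c^2) + (2*β^2*c^2*d^2) + (-2*β^2*c^4) + (-8*β^2*a^2*c^2)) * h1 + ((1*β^2*d^2) + (-1*β^2*c^2) + (2*β) + (-4*β^2*a^4*c^2) + (-4*β^2*a^4*d^2) + (-4*β^2*a^2) + (1*β^2)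 + (-4*β*a^2) + (6*β^2*a^2*c^2) + (-4*β^2*a*b*c*d) + (2*β^2*a^2*d^2) + (4*β^2*a^4)) * h2

lemma sin_ne_of_close (θ θh : ℝ) (h1 : |θh - θ| ≤ Real.pi / 2) (h2 : θh ≠ θ) :
    Real.sin (θh - θ) ≠ 0 := by
  have hπ := Real.pi_pos
  intro h
  obtain ⟨n, hn⟩ := Real.sin_eq_zero_iff.1 h
  rcases eq_or_ne n 0 with h0 | h0
  · rw [h0] at hn; simp at hn
    exact h2 (by linarith)
  · have : (1:ℝ) ≤ |(n:ℝ)| := by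
      have := Int.one_le_abs (by exact_mod_cast (by simpa using h0) : n ≠ 0)
      calc (1:ℝ) ≤ |(n:ℤ)| := by exact_mod_cast this
      _ = |(n:ℝ)| := by push_cast [Int.cast_abs]; ring
    have habs : |θh - θ| = |(n:ℝ)| * Real.pi := by
      rw [← hn, abs_mul, abs_of_pos hπ]
    nlinarith

/-- For the 2-fold anisotropy, F̃^θ simplifies to
4 - 2(1 + β cos 2θ) + 2β²(1 - cos 2(θ̂+θ))/(1 + β cos 2θ), its supremum over
[θ-π/2, θ+π/2] equals 4 - 2γ̂(θ) + 4β²/γ̂(θ), and this value is attained at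
θ̂ = π/2 - θ (mod π). -/
theorem twofold_kmin (β θ : ℝ) (hβ : |β| < 1) :
    (∀ θh : ℝ, (∀ j : ℤ, θh - θ ≠ j * Real.pi) →
      Ftil β θ θh = 4 - 2 * (1 + β * Real.cos (2 * θ)) +
        2 * β ^ 2 * (1 - Real.cos (2 * (θh + θ))) / (1 + β * Real.cos (2 * θ))) ∧
    sSup (Ftil β θ '' (Set.Icc (θ - Real.pi / 2) (θ + Real.pi / 2) \ {θ}))
      = 4 - 2 * gam2 β θ + 4 * β ^ 2 / gam2 β θ ∧
    (∀ (j : ℤ) (θh : ℝ), θh = Real.pi / 2 - θ + j * Real.pi →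
      (∀ i : ℤ, θh - θ ≠ i * Real.pi) →
      Ftil β θ θh = 4 - 2 * gam2 β θ + 4 * β ^ 2 / gam2 β θ) := by
  have hπ := Real.pi_pos
  have hγ : 0 < gam2 β θ := gam2_pos β θ hβ
  have hγ' : gam2 β θ = 1 + β * Real.cos (2 * θ) := rfl
  refine ⟨?_, ?_, ?_⟩
  · intro θh hj
    apply Ftil_eq β θ θh hβ
    intro h
    obtain ⟨n, hn⟩ := Real.sin_eq_zero_iff.1 h
    exact hj n hn.symm
  · -- the sSup computation
    apply csSup_eq_of_forall_le_of_forall_lt_exists_gt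
    · refine ⟨Ftil β θ (θ + Real.pi/2), Set.mem_image_of_mem _ ⟨⟨by linarith, le_refl _⟩, ?_⟩⟩
      simp only [Set.mem_singleton_iff]; intro h; linarith
    · rintro a ⟨θh, ⟨hmem, hne⟩, rfl⟩
      simp only [Set.mem_Icc] at hmem
      simp only [Set.mem_singleton_iff] at hne
      have hs : Real.sin (θh - θ) ≠ 0 :=
        sin_ne_of_close θ θh (abs_le.2 ⟨by linarith [hmem.1], by linarith [hmem.2]⟩) hne
      rw [Ftil_eq β θ θh hβ hs, ← hγ']
      have hc : Real.cos (2 * (θh + θ)) ≥ -1 := Real.neg_one_le_cos _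
      have hnum : 2 * β ^ 2 * (1 - Real.cos (2 * (θh + θ))) ≤ 4 * β ^ 2 := by nlinarith [sq_nonneg β]
      have h2 : 2 * β ^ 2 * (1 - Real.cos (2 * (θh + θ))) / gam2 β θ ≤ 4 * β ^ 2 / gam2 β θ :=
        by gcongr
      linarith
    · intro w hw
      set x := Real.pi - 4 * θ with hx
      set j := round (x / (2 * Real.pi)) with hjdef
      set r := x - 2 * Real.pi * j with hrdef
      have hrabs : |r| ≤ Real.pi := by
        have h1 : |x / (2 * Real.pi) - j| ≤ 1/2 := abs_sub_round _
        have h2 : r = 2 * Real.pi * (x / (2 * Real.pi) - j) := by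
          field_simp [hrdef]
          exact hrdef
        rw [h2, abs_mul, abs_of_pos (by linarith : (0:ℝ) < 2 * Real.pi)]
        nlinarith
      clear_value r
      clear_value j
      clear_value x
      by_cases hr : r = 0
      · -- 4θ = π - 2πj : sup approached near θh = θ
        have h4θ : 4 * θ = Real.pi - 2 * Real.pi * j := by
          have h' : r = Real.pi - 4 * θ - 2 * Real.pi * j := by rw [hrdef, hx]
          rw [hr] at h'; linarith
        set ε := (4 - 2 * gam2 β θ + 4 * β ^ 2 / gam2 β θ) - w with hε
        have hεpos : 0 < ε := by simp [hε]; linarith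
        clear_value ε
        set t := min (Real.pi/2) (Real.sqrt (ε * gam2 β θ / (4 * β ^ 2 + 1))) with ht
        have hspos : 0 < Real.sqrt (ε * gam2 β θ / (4 * β ^ 2 + 1)) := by
          apply Real.sqrt_pos.2; positivity
        have htpos : 0 < t := lt_min (by linarith) hspos
        have htle : t ≤ Real.pi/2 := min_le_left _ _
        refine ⟨Ftil β θ (θ + t), Set.mem_image_of_mem _ ⟨?_, ?_⟩, ?_⟩
        · simp only [Set.mem_Icc]; constructor <;> linarith
        · simp only [Set.mem_singleton_iff]; intro h; linarith
        · have hs : Real.sin (θ + t - θ) ≠ 0 := by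
            apply sin_ne_of_close θ (θ + t) _ (by intro h; linarith)
            rw [show θ + t - θ = t by ring, abs_of_pos htpos]; exact htle
          rw [Ftil_eq β θ (θ + t) hβ hs, ← hγ']
          have hcos : Real.cos (2 * (θ + t + θ)) = -Real.cos (2 * t) := by
            rw [show 2 * (θ + t + θ) = (Real.pi + 2 * t) + (-j : ℤ) * (2 * Real.pi) by
              push_cast; linarith]
            rw [Real.cos_add_int_mul_two_pi]
            simp [Real.cos_add]
          rw [hcos]
          -- bound: 2β²(1 - cos 2t) < ε γ  implies value > w
          have hsin : Real.sin t ≤ t := Real.sin_le htpos.le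
          have hsin0 : 0 ≤ Real.sin t := Real.sin_nonneg_of_nonneg_of_le_pi htpos.le (by linarith)
          have hcos2t : 1 - Real.cos (2 * t) = 2 * Real.sin t ^ 2 := by
            rw [Real.cos_two_mul']; nlinarith [Real.sin_sq_add_cos_sq t]
          have hts : t ^ 2 ≤ ε * gam2 β θ / (4 * β ^ 2 + 1) := by
            have h1 : t ≤ Real.sqrt (ε * gam2 β θ / (4 * β ^ 2 + 1)) := min_le_right _ _
            nlinarith [Real.sq_sqrt (show (0:ℝ) ≤ ε * gam2 β θ / (4 * β ^ 2 + 1) by positivity)]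
          clear_value t
          have key : 2 * β ^ 2 * (1 - Real.cos (2 * t)) < ε * gam2 β θ := by
            have hb : 4 * β ^ 2 * (ε * gam2 β θ / (4 * β ^ 2 + 1)) < ε * gam2 β θ := by
              have h1 : 4 * β ^ 2 * (ε * gam2 β θ / (4 * β ^ 2 + 1))
                  = (ε * gam2 β θ) * (4 * β ^ 2 / (4 * β ^ 2 + 1)) := by ring
              have h2 : 4 * β ^ 2 / (4 * β ^ 2 + 1) < 1 := by
                rw [div_lt_one (by positivity)]; linarith [sq_nonneg β]
              have h3 : 0 < ε * gam2 β θ := mul_pos hεpos hγ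
              rw [h1]
              have := mul_lt_mul_of_pos_left h2 h3
              linarith
            have hsq : Real.sin t ^ 2 ≤ ε * gam2 β θ / (4 * β ^ 2 + 1) := by nlinarith
            have h4 : 4 * β ^ 2 * Real.sin t ^ 2 ≤ 4 * β ^ 2 * (ε * gam2 β θ / (4 * β ^ 2 + 1)) :=
              mul_le_mul_of_nonneg_left hsq (by positivity)
            have h5 : 2 * β ^ 2 * (1 - Real.cos (2 * t)) = 4 * β ^ 2 * Real.sin t ^ 2 := by
              rw [hcos2t]; ring
            linarith
          have hfrac : 2 * β ^ 2 * (1 - -Real.cos (2 * t)) / gam2 β θ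
              > 4 * β ^ 2 / gam2 β θ - ε := by
            have heq : 4 * β ^ 2 / gam2 β θ - 2 * β ^ 2 * (1 - -Real.cos (2 * t)) / gam2 β θ
                = 2 * β ^ 2 * (1 - Real.cos (2 * t)) / gam2 β θ := by ring
            have hlt : 2 * β ^ 2 * (1 - Real.cos (2 * t)) / gam2 β θ < ε := by
              rw [div_lt_iff₀ hγ]; linarith [key]
            linarith
          have : w = 4 - 2 * gam2 β θ + 4 * β ^ 2 / gam2 β θ - ε := by rw [hε]; ring
          linarith
      · -- r ≠ 0 : sup attained at θh = θ + r/2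
        refine ⟨Ftil β θ (θ + r/2), Set.mem_image_of_mem _ ⟨?_, ?_⟩, ?_⟩
        · simp only [Set.mem_Icc]
          have := abs_le.1 hrabs
          constructor <;> [linarith [this.1]; linarith [this.2]]
        · simp only [Set.mem_singleton_iff]; intro h
          apply hr; linarith [show θ + r/2 = θ from h]
        · have hs : Real.sin (θ + r/2 - θ) ≠ 0 := by
            apply sin_ne_of_close θ (θ + r/2)
            · rw [show θ + r/2 - θ = r/2 by ring, abs_div, abs_two]
              linarith
            · intro h; apply hr; linarith [show θ + r/2 = θ from h]
          rw [Ftil_eq β θ (θ + r/2) hβ hs, ← hγ']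
          have hcos : Real.cos (2 * (θ + r/2 + θ)) = -1 := by
            rw [show 2 * (θ + r/2 + θ) = Real.pi + (-j : ℤ) * (2 * Real.pi) by
              push_cast
              have h' : r = Real.pi - 4 * θ - 2 * Real.pi * j := by rw [hrdef, hx]
              linarith]
            rw [Real.cos_add_int_mul_two_pi, Real.cos_pi]
          rw [hcos]
          have : 4 - 2 * gam2 β θ + 2 * β ^ 2 * (1 - -1) / gam2 β θ
              = 4 - 2 * gam2 β θ + 4 * β ^ 2 / gam2 β θ := by ring
          linarith
  · -- attained at θh = π/2 - θ + jπ
    intro j θh hθh hi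
    have hs : Real.sin (θh - θ) ≠ 0 := by
      intro h
      obtain ⟨n, hn⟩ := Real.sin_eq_zero_iff.1 h
      exact hi n hn.symm
    rw [Ftil_eq β θ θh hβ hs, ← hγ']
    have hcos : Real.cos (2 * (θh + θ)) = -1 := by
      rw [show 2 * (θh + θ) = Real.pi + (j : ℤ) * (2 * Real.pi) by
        push_cast; rw [hθh]; ring]
      rw [Real.cos_add_int_mul_two_pi, Real.cos_pi]
    rw [hcos]; ring
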